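/- Let m ≥ 1 be an integer, α > 0, ρ ∈ ℝ, n ≥ 1, and let K_n be the Laguerre-Gaussian kernel on ℝⁿ with parameters m, α, ρ. Then e^{−nρ}·∫_{ℝⁿ} K_n(x)² dx = [e^{nρ}·α^n·(mπ/2)^{n/2} / binom(m−1+n/2, m−1)²] · Σ_{k=0}^{m−1} Σ_{j=0}^{m−1} binom(m−1+n/2, m−1−k)·binom(m−1+n/2, m−1−j)·((−1)^{k+j}/(k!·j!))·Γ(n/2+k+j)/(2^{k+j}·Γ(n/2)), where binom(m−1+n/2, m−1−k) = Γ(m+n/2)/(Γ(n/2+k+1)·(m−1−k)!). -/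

import Mathlib

open MeasureTheory Filter Real
open scoped ENNReal Topology

/-- The generalized Laguerre polynomial
`L_m^β(r) = Σ_{k=0}^m [Γ(m+β+1)/(Γ(β+k+1)·(m−k)!)]·(−r)^k/k!`. -/
noncomputable def laguerreL (m : ℕ) (β : ℝ) (r : ℝ) : ℝ :=
  ∑ k ∈ Finset.range (m + 1),
    (Real.Gamma ((m : ℝ) + β + 1) / (Real.Gamma (β + (k : ℝ) + 1) * (Nat.factorial (m - k)))) *
      ((-r) ^ k / (Nat.factorial k))

/-- The Laguerre-Gaussian kernel on `ℝⁿ` with parameters `m ≥ 1`, `α > 0`, `ρ ∈ ℝ`: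
`K_n(x) = (e^{nρ}/binom(m−1+n/2, m−1))·L_{m−1}^{n/2}(|x/α|²/m)·e^{−|x/α|²/m}`, where
`binom(m−1+n/2, m−1) = Γ(m+n/2)/(Γ(n/2+1)·(m−1)!)`. -/
noncomputable def lagGaussKernel (m : ℕ) (α ρ : ℝ) (n : ℕ)
    (x : EuclideanSpace ℝ (Fin n)) : ℝ :=
  (Real.exp (n * ρ) /
      (Real.Gamma ((m : ℝ) + (n : ℝ) / 2) /
        (Real.Gamma ((n : ℝ) / 2 + 1) * (Nat.factorial (m - 1))))) *
    laguerreL (m - 1) ((n : ℝ) / 2) (‖x‖ ^ 2 / (α ^ 2 * m)) *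
    Real.exp (-(‖x‖ ^ 2 / (α ^ 2 * m)))

/-! The kernel is a polynomial in `‖x‖²` times the Gaussian `e^{-‖x‖²/(α²m)}`, so `K_n²` expands
into a double sum of Gaussian moments. In polar coordinates each moment is a Gamma integral:
`∫_{ℝⁿ} ‖x‖^{2s} e^{-‖x‖²/c} dx = (πc)^{n/2} c^s Γ(n/2+s) / Γ(n/2)`. -/

open Module (finrank)
open scoped Nat

lemma integrableOn_pow_mul_exp_neg_sq_div {c : ℝ} (hc : 0 < c) (p : ℕ) :
    IntegrableOn (fun y : ℝ ↦ y ^ p * exp (-(y ^ 2 / c))) (Set.Ioi 0) := by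
  refine (integrableOn_rpow_mul_exp_neg_mul_sq (inv_pos.2 hc)
    (neg_one_lt_zero.trans_le p.cast_nonneg)).congr_fun (fun y _ ↦ ?_) measurableSet_Ioi
  simp only [rpow_natCast, neg_mul, ← div_eq_inv_mul]

lemma integral_Ioi_pow_mul_exp_neg_sq_div {c : ℝ} (hc : 0 < c) (p : ℕ) :
    ∫ y in Set.Ioi (0 : ℝ), y ^ p * exp (-(y ^ 2 / c)) =
      c ^ (((p : ℝ) + 1) / 2) / 2 * Gamma (((p : ℝ) + 1) / 2) := by
  have h := integral_rpow_mul_exp_neg_mul_rpow two_pos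
    (neg_one_lt_zero.trans_le p.cast_nonneg) (inv_pos.2 hc)
  simp only [rpow_natCast, rpow_two, neg_mul, ← div_eq_inv_mul, neg_div] at h
  rw [h, inv_rpow hc.le, ← rpow_neg hc.le, neg_neg]
  ring

lemma sq_sum_pow_mul_exp_neg_sq_div (d : ℕ → ℝ) (N : ℕ) (c r : ℝ) :
    ((∑ k ∈ Finset.range N, d k * r ^ (2 * k)) * exp (-(r ^ 2 / c))) ^ 2 =
      ∑ k ∈ Finset.range N, ∑ j ∈ Finset.range N,
        d k * d j * (r ^ (2 * (k + j)) * exp (-(r ^ 2 / (c / 2)))) := by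
  have hexp : exp (-(r ^ 2 / c)) ^ 2 = exp (-(r ^ 2 / (c / 2))) := by
    rw [sq, ← exp_add]; ring_nf
  rw [mul_pow, hexp, sq, Finset.sum_mul_sum, Finset.sum_mul]
  refine Finset.sum_congr rfl fun k _ ↦ ?_
  rw [Finset.sum_mul]
  refine Finset.sum_congr rfl fun j _ ↦ ?_
  ring

section RadialIntegrals

variable {E : Type*} [NormedAddCommGroup E] [InnerProductSpace ℝ E] [FiniteDimensional ℝ E]
  [MeasurableSpace E] [BorelSpace E] [Nontrivial E]

lemma integral_fun_norm_eq_mul_integral_Ioi (f : ℝ → ℝ) :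
    ∫ x : E, f ‖x‖ = finrank ℝ E * (√π ^ finrank ℝ E / Gamma (finrank ℝ E / 2 + 1)) *
      ∫ y in Set.Ioi (0 : ℝ), y ^ (finrank ℝ E - 1) * f y := by
  rw [integral_fun_norm_addHaar volume f, measureReal_def, InnerProductSpace.volume_ball,
    ENNReal.ofReal_one, one_pow, one_mul, ENNReal.toReal_ofReal (by positivity)]
  simp only [nsmul_eq_mul, smul_eq_mul, mul_assoc]

lemma integrable_norm_pow_mul_exp_neg_sq_div {c : ℝ} (hc : 0 < c) (s : ℕ) :
    Integrable (fun x : E ↦ ‖x‖ ^ s * exp (-(‖x‖ ^ 2 / c))) := by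
  refine (integrable_fun_norm_addHaar volume (f := fun y ↦ y ^ s * exp (-(y ^ 2 / c)))).2 ?_
  simp only [smul_eq_mul, ← mul_assoc, ← pow_add]
  exact integrableOn_pow_mul_exp_neg_sq_div hc _

lemma integral_norm_pow_mul_exp_neg_sq_div {c : ℝ} (hc : 0 < c) (s : ℕ) :
    ∫ x : E, ‖x‖ ^ (2 * s) * exp (-(‖x‖ ^ 2 / c)) =
      (π * c) ^ ((finrank ℝ E : ℝ) / 2) * c ^ s * Gamma (finrank ℝ E / 2 + s) /
        Gamma (finrank ℝ E / 2) := by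
  rw [integral_fun_norm_eq_mul_integral_Ioi (fun y ↦ y ^ (2 * s) * exp (-(y ^ 2 / c)))]
  set n := finrank ℝ E
  have hn : 0 < n := Module.finrank_pos
  simp only [← mul_assoc, ← pow_add]
  rw [integral_Ioi_pow_mul_exp_neg_sq_div hc]
  have hcast : ((n - 1 + 2 * s : ℕ) : ℝ) + 1 = 2 * (n / 2 + s) := by
    push_cast [Nat.cast_sub hn]; ring
  have hΓ : Gamma ((n : ℝ) / 2 + 1) = n / 2 * Gamma (n / 2) := Gamma_add_one (by positivity)
  have hπ : √π ^ n = π ^ ((n : ℝ) / 2) := by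
    rw [sqrt_eq_rpow, ← rpow_natCast, ← rpow_mul pi_pos.le]; ring_nf
  rw [hcast, mul_div_cancel_left₀ _ two_ne_zero, rpow_add hc, rpow_natCast, hΓ, hπ,
    mul_rpow pi_pos.le hc.le]
  have : Gamma ((n : ℝ) / 2) ≠ 0 := (Gamma_pos_of_pos (by positivity)).ne'
  field_simp

lemma integral_sq_sum_norm_pow_mul_exp {c : ℝ} (hc : 0 < c) (d : ℕ → ℝ) (N : ℕ) :
    ∫ x : E, ((∑ k ∈ Finset.range N, d k * ‖x‖ ^ (2 * k)) * exp (-(‖x‖ ^ 2 / c))) ^ 2 =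
      ∑ k ∈ Finset.range N, ∑ j ∈ Finset.range N, d k * d j *
        ((π * (c / 2)) ^ ((finrank ℝ E : ℝ) / 2) * (c / 2) ^ (k + j) *
          Gamma (finrank ℝ E / 2 + (k + j : ℕ)) / Gamma (finrank ℝ E / 2)) := by
  have hc2 : 0 < c / 2 := half_pos hc
  have hint (s : ℕ) := integrable_norm_pow_mul_exp_neg_sq_div (E := E) hc2 (2 * s)
  simp_rw [sq_sum_pow_mul_exp_neg_sq_div]
  rw [integral_finsetSum _ fun k _ ↦ integrable_finsetSum _ fun j _ ↦ (hint _).const_mul _]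
  refine Finset.sum_congr rfl fun k _ ↦ ?_
  rw [integral_finsetSum _ fun j _ ↦ (hint _).const_mul _]
  refine Finset.sum_congr rfl fun j _ ↦ ?_
  rw [integral_const_mul, integral_norm_pow_mul_exp_neg_sq_div hc2]

end RadialIntegrals

lemma sq_mul_rpow_natCast_div_two {α t : ℝ} (hα : 0 ≤ α) (ht : 0 ≤ t) (n : ℕ) :
    (α ^ 2 * t) ^ ((n : ℝ) / 2) = α ^ n * t ^ ((n : ℝ) / 2) := by
  rw [mul_rpow (by positivity) ht, ← rpow_natCast α 2, ← rpow_mul hα, ← rpow_natCast α n]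
  congr 2
  push_cast; ring

lemma laguerreL_pred_eq_sum {m : ℕ} (hm : 1 ≤ m) (β r : ℝ) :
    laguerreL (m - 1) β r = ∑ k ∈ Finset.range m,
      Gamma (m + β) / (Gamma (β + k + 1) * (m - 1 - k)!) * ((-r) ^ k / k !) := by
  have hcast : ((m - 1 : ℕ) : ℝ) + β + 1 = m + β := by push_cast [Nat.cast_sub hm]; ring
  rw [laguerreL, Nat.sub_add_cancel hm, hcast]

noncomputable def lagGaussCoeff (m : ℕ) (α ρ : ℝ) (n k : ℕ) : ℝ :=
  exp (n * ρ) / (Gamma (m + n / 2) / (Gamma (n / 2 + 1) * (m - 1)!)) *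
    (Gamma (m + n / 2) / (Gamma (n / 2 + k + 1) * (m - 1 - k)!)) *
    ((-1) ^ k / (k ! * (α ^ 2 * m) ^ k))

lemma lagGaussKernel_eq_sum {m : ℕ} (hm : 1 ≤ m) (α ρ : ℝ) (n : ℕ)
    (x : EuclideanSpace ℝ (Fin n)) :
    lagGaussKernel m α ρ n x =
      (∑ k ∈ Finset.range m, lagGaussCoeff m α ρ n k * ‖x‖ ^ (2 * k)) *
        exp (-(‖x‖ ^ 2 / (α ^ 2 * m))) := by
  rw [lagGaussKernel, laguerreL_pred_eq_sum hm, Finset.mul_sum, Finset.sum_mul,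
    Finset.sum_mul]
  refine Finset.sum_congr rfl fun k _ ↦ ?_
  rw [neg_pow, div_pow, ← pow_mul, lagGaussCoeff]
  ring

theorem laguerre_gaussian_global_repulsion (m : ℕ) (hm : 1 ≤ m) (α ρ : ℝ) (hα : 0 < α)
    (n : ℕ) (hn : 1 ≤ n) :
    Real.exp (-(n * ρ)) * ∫ x : EuclideanSpace ℝ (Fin n), (lagGaussKernel m α ρ n x) ^ 2 =
      (Real.exp (n * ρ) * α ^ n * ((m : ℝ) * π / 2) ^ ((n : ℝ) / 2) /
          (Real.Gamma ((m : ℝ) + (n : ℝ) / 2) /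
            (Real.Gamma ((n : ℝ) / 2 + 1) * (Nat.factorial (m - 1)))) ^ 2) *
        ∑ k ∈ Finset.range m, ∑ j ∈ Finset.range m,
          (Real.Gamma ((m : ℝ) + (n : ℝ) / 2) /
              (Real.Gamma ((n : ℝ) / 2 + (k : ℝ) + 1) * (Nat.factorial (m - 1 - k)))) *
            (Real.Gamma ((m : ℝ) + (n : ℝ) / 2) /
              (Real.Gamma ((n : ℝ) / 2 + (j : ℝ) + 1) * (Nat.factorial (m - 1 - j)))) *
            ((-1 : ℝ) ^ (k + j) / (Nat.factorial k * Nat.factorial j)) *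
            (Real.Gamma ((n : ℝ) / 2 + (k : ℝ) + (j : ℝ)) /
              (2 ^ (k + j) * Real.Gamma ((n : ℝ) / 2))) := by
  have : NeZero n := ⟨by omega⟩
  have hc : 0 < α ^ 2 * m := by positivity
  simp_rw [lagGaussKernel_eq_sum hm]
  rw [integral_sq_sum_norm_pow_mul_exp hc, finrank_euclideanSpace_fin]
  simp_rw [Finset.mul_sum]
  refine Finset.sum_congr rfl fun k _ ↦ Finset.sum_congr rfl fun j _ ↦ ?_
  rw [show π * (α ^ 2 * m / 2) = α ^ 2 * (m * π / 2) by ring,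
    sq_mul_rpow_natCast_div_two hα.le (by positivity), exp_neg, div_pow, lagGaussCoeff,
    lagGaussCoeff, Nat.cast_add, ← add_assoc]
  have hΓ (t : ℝ) (ht : 0 < t) : Gamma t ≠ 0 := (Gamma_pos_of_pos ht).ne'
  have hΓm := hΓ (m + n / 2) (by positivity)
  have hΓ1 := hΓ (n / 2 + 1) (by positivity)
  have hΓk := hΓ (n / 2 + k + 1) (by positivity)
  have hΓj := hΓ (n / 2 + j + 1) (by positivity)
  have hΓ0 := hΓ (n / 2) (by positivity)
  field_simp
  ring
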